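/- (Overshoot-aware variable drift, upper bound.) Let k' > 0 be a threshold, let (X_t)_{t∈ℕ} be integrable nonnegative real-valued random variables adapted to a filtration (F_t) with X_0 = x_0 ≥ k' deterministic, and let T = inf{t : X_t < k'}; assume T is almost surely finite and X_T is integrable, where X_T denotes the value of the process at time T. Suppose there is a non-decreasing function h : [k', ∞) → (0, ∞) such that for all t, on the event {t < T}, X_t − E[X_{t+1} | F_t] ≥ h(X_t) almost surely. Then E[T] ≤ (k' − E[X_T]) / h(k') + ∫_{k'}^{x_0} 1/h(z) dz. -/

import Mathlib

/-!
Let `g x = ∫₀ˣ dz / h (max k' z)`. Since `1 / h (max k' ·)` is antitone, `g` is concave with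
`g x - g y ≥ (x - y) / h x` for `x ≥ k'`; pulling the `ℱ t`-measurable weight `1 / h (X t)` out
of the conditional expectation, the drift condition gives
`P(T > t) ≤ E[g (X t) - g (X (t+1)); T > t]`. Summing over `t < n` telescopes to
`g x₀ - E[g (X (T ∧ n))] ≤ g x₀ - E[X_T; T ≤ n] / h k'`, because `g x = x / h k'` for `x ≤ k'`
and `g ≥ 0` on `[k', ∞)`. Letting `n → ∞` gives `E[T] = ∑ P(T > t) ≤ g x₀ - E[X_T] / h k'`,
and `g x₀ = k' / h k' + ∫_{k'}^{x₀} 1 / h`.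
-/

open MeasureTheory

/-- First time at which the process `X` takes a value strictly below `k'`
(`⊤` if this never happens). -/
noncomputable def hitTimeLT {Ω : Type*} (X : ℕ → Ω → ℝ) (k' : ℝ) (ω : Ω) : ℕ∞ :=
  sInf {r : ℕ∞ | ∃ t : ℕ, r = (t : ℕ∞) ∧ X t ω < k'}

/-- The value `X_T` of the process at the (a.s. finite) stopping time `T`. -/
noncomputable def stoppedVal {Ω : Type*} (X : ℕ → Ω → ℝ) (T : Ω → ℕ∞) (ω : Ω) : ℝ :=
  X (T ω).toNat ω

open Filter Topology
open scoped ENNReal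

theorem Antitone.sub_mul_le_intervalIntegral {φ : ℝ → ℝ} (hφ : Antitone φ) (x y : ℝ) :
    (x - y) * φ x ≤ ∫ z in y..x, φ z := by
  rcases le_total y x with hyx | hxy
  · have := intervalIntegral.integral_mono_on hyx intervalIntegrable_const
      (hφ.intervalIntegrable (μ := volume)) fun z hz => hφ hz.2
    simpa only [intervalIntegral.integral_const, smul_eq_mul] using this
  · have := intervalIntegral.integral_mono_on hxy (hφ.intervalIntegrable (μ := volume))
      intervalIntegrable_const fun z hz => hφ hz.1
    rw [intervalIntegral.integral_const, smul_eq_mul] at this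
    rw [intervalIntegral.integral_symm]
    linarith

section DriftPotential

variable {k' : ℝ} {h : ℝ → ℝ}

/-- Below `k'` the drift bound `h` is replaced by `h k'`, so that the integrand is a positive
antitone function on all of `ℝ`. -/
noncomputable def driftPotential (k' : ℝ) (h : ℝ → ℝ) (x : ℝ) : ℝ :=
  ∫ z in (0 : ℝ)..x, 1 / h (max k' z)

theorem antitone_one_div_comp_max (hpos : ∀ z, k' ≤ z → 0 < h z)
    (hmono : MonotoneOn h (Set.Ici k')) : Antitone fun z => 1 / h (max k' z) :=
  fun _ _ hab => one_div_le_one_div_of_le (hpos _ (le_max_left _ _))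
    (hmono (le_max_left k' _) (le_max_left k' _) (max_le_max le_rfl hab))

@[simp]
theorem driftPotential_zero : driftPotential k' h 0 = 0 :=
  intervalIntegral.integral_same

theorem driftPotential_sub_driftPotential (hpos : ∀ z, k' ≤ z → 0 < h z)
    (hmono : MonotoneOn h (Set.Ici k')) (x y : ℝ) :
    driftPotential k' h x - driftPotential k' h y = ∫ z in y..x, 1 / h (max k' z) :=
  intervalIntegral.integral_interval_sub_left
    (antitone_one_div_comp_max hpos hmono).intervalIntegrable
    (antitone_one_div_comp_max hpos hmono).intervalIntegrable

theorem sub_div_le_driftPotential_sub (hpos : ∀ z, k' ≤ z → 0 < h z)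
    (hmono : MonotoneOn h (Set.Ici k')) (x y : ℝ) :
    (x - y) / h (max k' x) ≤ driftPotential k' h x - driftPotential k' h y := by
  rw [driftPotential_sub_driftPotential hpos hmono, div_eq_mul_one_div]
  exact (antitone_one_div_comp_max hpos hmono).sub_mul_le_intervalIntegral x y

theorem monotone_driftPotential (hpos : ∀ z, k' ≤ z → 0 < h z)
    (hmono : MonotoneOn h (Set.Ici k')) : Monotone (driftPotential k' h) := fun x y hxy => by
  have := intervalIntegral.integral_nonneg (μ := volume) hxy
    fun z _ => (one_div_pos.2 (hpos _ (le_max_left k' z))).le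
  linarith [driftPotential_sub_driftPotential hpos hmono y x]

theorem driftPotential_of_le (hk' : 0 ≤ k') {x : ℝ} (hx : x ≤ k') :
    driftPotential k' h x = x / h k' := by
  have : ∀ z ∈ Set.uIcc 0 x, 1 / h (max k' z) = 1 / h k' := fun z hz => by
    rw [max_eq_left (Set.mem_uIcc.1 hz |>.elim (fun hz => hz.2.trans hx) fun hz => hz.2.trans hk')]
  rw [driftPotential, intervalIntegral.integral_congr this, intervalIntegral.integral_const,
    smul_eq_mul, sub_zero, mul_one_div]

theorem driftPotential_of_ge (hk' : 0 ≤ k') (hpos : ∀ z, k' ≤ z → 0 < h z)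
    (hmono : MonotoneOn h (Set.Ici k')) {x : ℝ} (hx : k' ≤ x) :
    driftPotential k' h x = k' / h k' + ∫ z in k'..x, 1 / h z := by
  have : ∀ z ∈ Set.uIcc k' x, 1 / h (max k' z) = 1 / h z := fun z hz => by
    rw [max_eq_right (Set.uIcc_of_le hx ▸ hz).1]
  rw [← driftPotential_of_le hk' le_rfl, ← intervalIntegral.integral_congr this,
    ← driftPotential_sub_driftPotential hpos hmono, add_sub_cancel]

theorem abs_driftPotential_le (hk' : 0 ≤ k') (hpos : ∀ z, k' ≤ z → 0 < h z)
    (hmono : MonotoneOn h (Set.Ici k')) (x : ℝ) :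
    |driftPotential k' h x| ≤ |x| / h k' := by
  rcases le_total x k' with hx | hx
  · rw [driftPotential_of_le hk' hx, abs_div, abs_of_pos (hpos k' le_rfl)]
  · have h0 := monotone_driftPotential hpos hmono (hk'.trans hx)
    have h1 := sub_div_le_driftPotential_sub hpos hmono 0 x
    rw [driftPotential_zero] at h0 h1
    rw [max_eq_left hk', zero_sub, zero_sub, neg_div, neg_le_neg_iff] at h1
    rwa [abs_of_nonneg h0, abs_of_nonneg (hk'.trans hx)]

theorem integrable_driftPotential_comp {Ω : Type*} {m0 : MeasurableSpace Ω} {μ : Measure Ω}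
    (hk' : 0 ≤ k') (hpos : ∀ z, k' ≤ z → 0 < h z) (hmono : MonotoneOn h (Set.Ici k'))
    {f : Ω → ℝ} (hf : Integrable f μ) : Integrable (fun ω => driftPotential k' h (f ω)) μ :=
  (hf.norm.div_const (h k')).mono'
    ((monotone_driftPotential hpos hmono).measurable.comp_aemeasurable
      hf.aemeasurable).aestronglyMeasurable
    (ae_of_all _ fun ω => abs_driftPotential_le hk' hpos hmono (f ω))

end DriftPotential

theorem sub_stoppedProcess_eq_sum_indicator {Ω β : Type*} [AddCommGroup β]
    (u : ℕ → Ω → β) (τ : Ω → ℕ∞) (n : ℕ) :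
    u 0 - stoppedProcess u τ n =
      ∑ t ∈ Finset.range n, {ω | (t : ℕ∞) < τ ω}.indicator fun ω => u t ω - u (t + 1) ω := by
  induction n with
  | zero =>
    funext ω
    have h0 : stoppedProcess u τ 0 ω = u 0 ω := stoppedProcess_eq_of_le bot_le
    simp [h0]
  | succ n ih =>
    rw [Finset.sum_range_succ, ← ih]
    funext ω
    by_cases hn : (n : ℕ∞) < τ ω
    · have h1 : stoppedProcess u τ (n + 1) ω = u (n + 1) ω :=
        stoppedProcess_eq_of_le (by exact_mod_cast Order.add_one_le_of_lt hn)
      simp [h1, stoppedProcess_eq_of_le hn.le, hn]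
    · rw [not_lt] at hn
      have h1 : stoppedProcess u τ (n + 1) ω = u (τ ω).untopA ω :=
        stoppedProcess_eq_of_ge (hn.trans (WithTop.coe_le_coe.2 n.le_succ))
      simp [h1, stoppedProcess_eq_of_ge hn, hn]

theorem ENat.toENNReal_eq_tsum_indicator (n : ℕ∞) :
    (n : ℝ≥0∞) = ∑' t : ℕ, {t : ℕ | (t : ℕ∞) < n}.indicator (fun _ => 1) t := by
  rw [← tsum_subtype, ENNReal.tsum_set_one]
  cases n with
  | top => simp
  | coe n =>
    rw [show {t : ℕ | (t : ℕ∞) < n} = (Finset.range n : Set ℕ) by ext; simp,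
      Set.encard_coe_eq_coe_finsetCard]
    simp

theorem lintegral_toENNReal_eq_tsum_measure_lt {Ω : Type*} {m0 : MeasurableSpace Ω}
    {μ : Measure Ω} {τ : Ω → ℕ∞} (hτ : ∀ t : ℕ, MeasurableSet {ω | (t : ℕ∞) < τ ω}) :
    ∫⁻ ω, (τ ω : ℝ≥0∞) ∂μ = ∑' t : ℕ, μ {ω | (t : ℕ∞) < τ ω} := by
  have : ∀ ω, (τ ω : ℝ≥0∞) = ∑' t : ℕ, {ω | (t : ℕ∞) < τ ω}.indicator (fun _ => 1) ω :=
    fun ω => ENat.toENNReal_eq_tsum_indicator (τ ω)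
  simp_rw [this]
  rw [lintegral_tsum fun t => (measurable_const.indicator (hτ t)).aemeasurable]
  exact tsum_congr fun t => lintegral_indicator_one (hτ t)

theorem tendsto_setIntegral_le_of_ae_lt_top {Ω E : Type*} [NormedAddCommGroup E]
    [NormedSpace ℝ E] {m0 : MeasurableSpace Ω} {μ : Measure Ω} {τ : Ω → ℕ∞}
    (hτ : ∀ n : ℕ, MeasurableSet {ω | τ ω ≤ n}) (hfin : ∀ᵐ ω ∂μ, τ ω < ⊤) {f : Ω → E}
    (hf : Integrable f μ) :
    Tendsto (fun n : ℕ => ∫ ω in {ω | τ ω ≤ n}, f ω ∂μ) atTop (𝓝 (∫ ω, f ω ∂μ)) := by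
  have hmono : Monotone fun n : ℕ => {ω | τ ω ≤ n} := fun m n hmn ω (hω : τ ω ≤ m) =>
    hω.trans (Nat.cast_le.2 hmn)
  have hunion : (⋃ n : ℕ, {ω | τ ω ≤ n}) =ᵐ[μ] (Set.univ : Set Ω) := by
    refine ae_eq_univ.2 (measure_mono_null (fun ω hω => ?_) (ae_iff.1 hfin))
    intro hlt
    obtain ⟨n, hn⟩ := ENat.ne_top_iff_exists.1 hlt.ne
    exact hω (Set.mem_iUnion.2 ⟨n, hn.ge⟩)
  rw [← setIntegral_univ, ← setIntegral_congr_set hunion]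
  exact tendsto_setIntegral_of_monotone hτ hmono hf.integrableOn

theorem integral_mul_condExp_of_stronglyMeasurable {Ω : Type*} {m m0 : MeasurableSpace Ω}
    {μ : Measure Ω} [IsFiniteMeasure μ] (hm : m ≤ m0) {c Y : Ω → ℝ}
    (hc : StronglyMeasurable[m] c) {C : ℝ} (hcC : ∀ ω, ‖c ω‖ ≤ C) (hY : Integrable Y μ) :
    ∫ ω, c ω * (μ[Y|m]) ω ∂μ = ∫ ω, c ω * Y ω ∂μ :=
  calc ∫ ω, c ω * (μ[Y|m]) ω ∂μ = ∫ ω, (μ[c * Y|m]) ω ∂μ :=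
        integral_congr_ae (condExp_mul_of_stronglyMeasurable_left hc
          (hY.bdd_mul (hc.mono hm).aestronglyMeasurable (ae_of_all _ hcC)) hY).symm
    _ = ∫ ω, c ω * Y ω ∂μ := integral_condExp hm

section HittingTime

variable {Ω : Type*} {m0 : MeasurableSpace Ω} {ℱ : Filtration ℕ m0} {X : ℕ → Ω → ℝ} {k' : ℝ}

theorem hitTimeLT_eq_hittingAfter (X : ℕ → Ω → ℝ) (k' : ℝ) :
    hitTimeLT X k' = hittingAfter X (Set.Iio k') 0 := by
  funext ω
  refine le_antisymm ?_ (le_sInf ?_)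
  · cases hω : hittingAfter X (Set.Iio k') 0 ω with
    | top => exact le_top
    | coe t =>
      have := hittingAfter_mem_set_of_ne_top (hω ▸ WithTop.coe_ne_top)
      rw [hω] at this
      exact sInf_le ⟨t, rfl, this⟩
  · rintro _ ⟨t, rfl, ht⟩
    exact hittingAfter_le_of_mem (Nat.zero_le t) ht

theorem le_of_lt_hitTimeLT {ω : Ω} {t : ℕ} (ht : (t : ℕ∞) < hitTimeLT X k' ω) : k' ≤ X t ω := by
  rw [hitTimeLT_eq_hittingAfter] at ht
  simpa using notMem_of_lt_hittingAfter ht (Nat.zero_le t)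

theorem lt_of_hitTimeLT_eq {ω : Ω} {t : ℕ} (ht : hitTimeLT X k' ω = t) : X t ω < k' := by
  rw [hitTimeLT_eq_hittingAfter] at ht
  have := hittingAfter_mem_set_of_ne_top (u := X) (s := Set.Iio k') (n := 0) (ω := ω)
    (by rw [ht]; exact WithTop.coe_ne_top)
  rw [ht] at this
  exact this

theorem isStoppingTime_hitTimeLT (hX : Adapted ℱ X) (k' : ℝ) :
    IsStoppingTime ℱ (hitTimeLT X k') := by
  rw [hitTimeLT_eq_hittingAfter]
  exact hX.isStoppingTime_hittingAfter measurableSet_Iio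

theorem measurableSet_lt_hitTimeLT (hX : Adapted ℱ X) (k' : ℝ) (t : ℕ) :
    MeasurableSet[ℱ t] {ω | (t : ℕ∞) < hitTimeLT X k' ω} :=
  (isStoppingTime_hitTimeLT hX k').measurableSet_gt t

theorem measurableSet_hitTimeLT_le (hX : Adapted ℱ X) (k' : ℝ) (t : ℕ) :
    MeasurableSet[ℱ t] {ω | hitTimeLT X k' ω ≤ t} :=
  isStoppingTime_hitTimeLT hX k' t

end HittingTime

section VariableDrift

variable {Ω : Type*} {m0 : MeasurableSpace Ω} {μ : Measure Ω} {ℱ : Filtration ℕ m0}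
  {X : ℕ → Ω → ℝ} {k' : ℝ} {h : ℝ → ℝ}

theorem measureReal_lt_hitTimeLT_le_setIntegral [IsFiniteMeasure μ] (hadapt : Adapted ℱ X)
    (hint : ∀ t, Integrable (X t) μ) (hk' : 0 ≤ k') (hpos : ∀ z, k' ≤ z → 0 < h z)
    (hmono : MonotoneOn h (Set.Ici k')) (t : ℕ)
    (hdrift : ∀ᵐ ω ∂μ, (t : ℕ∞) < hitTimeLT X k' ω →
      h (X t ω) ≤ X t ω - (μ[X (t + 1)|ℱ t]) ω) :
    μ.real {ω | (t : ℕ∞) < hitTimeLT X k' ω} ≤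
      ∫ ω in {ω | (t : ℕ∞) < hitTimeLT X k' ω},
        (driftPotential k' h (X t ω) - driftPotential k' h (X (t + 1) ω)) ∂μ := by
  set A := {ω | (t : ℕ∞) < hitTimeLT X k' ω}
  have hA : MeasurableSet[ℱ t] A := measurableSet_lt_hitTimeLT hadapt k' t
  have hφ := antitone_one_div_comp_max hpos hmono
  set c := A.indicator fun ω => 1 / h (max k' (X t ω))
  have hc : StronglyMeasurable[ℱ t] c :=
    ((hφ.measurable.comp (hadapt t)).indicator hA).stronglyMeasurable
  have hcC : ∀ ω, ‖c ω‖ ≤ 1 / h k' := fun ω => by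
    refine (norm_indicator_le_norm_self _ ω).trans ?_
    rw [Real.norm_of_nonneg (one_div_pos.2 (hpos _ (le_max_left k' _))).le]
    simpa using hφ (le_max_left k' (X t ω))
  have hcint : ∀ {f : Ω → ℝ}, Integrable f μ → Integrable (fun ω => c ω * f ω) μ :=
    fun hf => hf.bdd_mul (hc.mono (ℱ.le t)).aestronglyMeasurable (ae_of_all _ hcC)
  have hgint := fun s => integrable_driftPotential_comp hk' hpos hmono (hint s)
  calc μ.real A = ∫ ω, A.indicator 1 ω ∂μ := (integral_indicator_one (ℱ.le t _ hA)).symm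
    _ ≤ ∫ ω, c ω * (X t ω - (μ[X (t + 1)|ℱ t]) ω) ∂μ := by
      refine integral_mono_ae ((integrable_const 1).indicator (ℱ.le t _ hA))
        (hcint ((hint t).sub integrable_condExp)) ?_
      filter_upwards [hdrift] with ω hω
      by_cases hωA : ω ∈ A
      · have hXt : k' ≤ X t ω := le_of_lt_hitTimeLT hωA
        simp only [c, Set.indicator_of_mem hωA, Pi.one_apply, max_eq_right hXt]
        rw [one_div_mul_eq_div, one_le_div (hpos _ hXt)]
        exact hω hωA
      · simp [c, hωA]
    _ = ∫ ω, c ω * (X t ω - X (t + 1) ω) ∂μ := by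
      simp_rw [mul_sub]
      rw [integral_sub (hcint (hint t)) (hcint integrable_condExp),
        integral_sub (hcint (hint t)) (hcint (hint (t + 1))),
        integral_mul_condExp_of_stronglyMeasurable (ℱ.le t) hc hcC (hint (t + 1))]
    _ ≤ _ := by
      rw [← integral_indicator (ℱ.le t _ hA)]
      refine integral_mono (hcint ((hint t).sub (hint (t + 1))))
        (((hgint t).sub (hgint (t + 1))).indicator (ℱ.le t _ hA)) fun ω => ?_
      by_cases hωA : ω ∈ A
      · simp only [c, Set.indicator_of_mem hωA]
        rw [one_div_mul_eq_div]
        exact sub_div_le_driftPotential_sub hpos hmono _ _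
      · simp [c, hωA]

theorem indicator_le_driftPotential_stoppedProcess (hk' : 0 ≤ k')
    (hpos : ∀ z, k' ≤ z → 0 < h z) (hmono : MonotoneOn h (Set.Ici k')) (n : ℕ) (ω : Ω) :
    {ω | hitTimeLT X k' ω ≤ n}.indicator (fun ω => stoppedVal X (hitTimeLT X k') ω / h k') ω ≤
      driftPotential k' h (stoppedProcess X (hitTimeLT X k') n ω) := by
  by_cases hT : ω ∈ {ω | hitTimeLT X k' ω ≤ n}
  · obtain ⟨m, hm⟩ := ENat.ne_top_iff_exists.1 (ne_top_of_le_ne_top (ENat.natCast_ne_top n) hT)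
    have hstop : stoppedProcess X (hitTimeLT X k') n ω = X m ω := by
      rw [stoppedProcess_eq_of_ge hT, ← hm]; rfl
    have hval : stoppedVal X (hitTimeLT X k') ω = X m ω := by
      rw [stoppedVal, ← hm, ENat.toNat_natCast]
    rw [hstop, Set.indicator_of_mem hT, hval,
      driftPotential_of_le hk' (lt_of_hitTimeLT_eq hm.symm).le]
  · have hstop : stoppedProcess X (hitTimeLT X k') n ω = X n ω :=
      stoppedProcess_eq_of_le (not_le.1 hT).le
    rw [hstop, Set.indicator_of_notMem hT]
    simpa using monotone_driftPotential hpos hmono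
      (hk'.trans (le_of_lt_hitTimeLT (not_le.1 hT)))

theorem sum_measureReal_lt_hitTimeLT_le [IsProbabilityMeasure μ] (hadapt : Adapted ℱ X)
    (hint : ∀ t, Integrable (X t) μ) {x0 : ℝ} (hX0 : ∀ ω, X 0 ω = x0)
    (hTint : Integrable (stoppedVal X (hitTimeLT X k')) μ) (hk' : 0 ≤ k')
    (hpos : ∀ z, k' ≤ z → 0 < h z) (hmono : MonotoneOn h (Set.Ici k'))
    (hdrift : ∀ t : ℕ, ∀ᵐ ω ∂μ, (t : ℕ∞) < hitTimeLT X k' ω →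
      h (X t ω) ≤ X t ω - (μ[X (t + 1)|ℱ t]) ω) (n : ℕ) :
    ∑ t ∈ Finset.range n, μ.real {ω | (t : ℕ∞) < hitTimeLT X k' ω} ≤
      driftPotential k' h x0 -
        (∫ ω in {ω | hitTimeLT X k' ω ≤ n}, stoppedVal X (hitTimeLT X k') ω ∂μ) / h k' := by
  have hgint := fun t => integrable_driftPotential_comp hk' hpos hmono (hint t)
  have hΔint : ∀ t : ℕ, Integrable ({ω | (t : ℕ∞) < hitTimeLT X k' ω}.indicator
      fun ω => driftPotential k' h (X t ω) - driftPotential k' h (X (t + 1) ω)) μ := fun t =>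
    ((hgint t).sub (hgint (t + 1))).indicator (ℱ.le t _ (measurableSet_lt_hitTimeLT hadapt k' t))
  have hstop : Integrable ({ω | hitTimeLT X k' ω ≤ n}.indicator
      fun ω => stoppedVal X (hitTimeLT X k') ω / h k') μ :=
    (hTint.div_const _).indicator (ℱ.le n _ (measurableSet_hitTimeLT_le hadapt k' n))
  calc ∑ t ∈ Finset.range n, μ.real {ω | (t : ℕ∞) < hitTimeLT X k' ω}
      ≤ ∑ t ∈ Finset.range n, ∫ ω, {ω | (t : ℕ∞) < hitTimeLT X k' ω}.indicator
          (fun ω => driftPotential k' h (X t ω) - driftPotential k' h (X (t + 1) ω)) ω ∂μ :=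
        Finset.sum_le_sum fun t _ => by
          rw [integral_indicator (ℱ.le t _ (measurableSet_lt_hitTimeLT hadapt k' t))]
          exact measureReal_lt_hitTimeLT_le_setIntegral hadapt hint hk' hpos hmono t (hdrift t)
    _ ≤ ∫ ω, (driftPotential k' h x0 - {ω | hitTimeLT X k' ω ≤ n}.indicator
          (fun ω => stoppedVal X (hitTimeLT X k') ω / h k') ω) ∂μ := by
      rw [← integral_finsetSum _ fun t _ => hΔint t]
      refine integral_mono (integrable_finsetSum _ fun t _ => hΔint t)
        ((integrable_const _).sub hstop) fun ω => ?_
      have htel := congrFun (sub_stoppedProcess_eq_sum_indicator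
        (fun t ω => driftPotential k' h (X t ω)) (hitTimeLT X k') n) ω
      simp only [Finset.sum_apply, hX0] at htel
      rw [← htel]
      exact sub_le_sub_left (indicator_le_driftPotential_stoppedProcess hk' hpos hmono n ω) _
    _ = _ := by
      rw [integral_sub (integrable_const _) hstop,
        integral_indicator (ℱ.le n _ (measurableSet_hitTimeLT_le hadapt k' n)), integral_div]
      simp

end VariableDrift

theorem overshoot_aware_variable_drift_upper_general
    {Ω : Type*} {m0 : MeasurableSpace Ω} (μ : Measure Ω) [IsProbabilityMeasure μ]
    (ℱ : Filtration ℕ m0) (X : ℕ → Ω → ℝ)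
    (hadapt : Adapted ℱ X) (hint : ∀ t, Integrable (X t) μ)
    (k' x0 : ℝ) (hk' : 0 < k') (hx0 : k' ≤ x0) (hX0 : ∀ ω, X 0 ω = x0)
    (hfin : ∀ᵐ ω ∂μ, hitTimeLT X k' ω < ⊤)
    (hTint : Integrable (stoppedVal X (hitTimeLT X k')) μ)
    (h : ℝ → ℝ) (hpos : ∀ z, k' ≤ z → 0 < h z) (hmono : MonotoneOn h (Set.Ici k'))
    (hdrift : ∀ t : ℕ, ∀ᵐ ω ∂μ, (t : ℕ∞) < hitTimeLT X k' ω →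
      h (X t ω) ≤ X t ω - (μ[X (t + 1)|ℱ t]) ω) :
    ∫⁻ ω, ((hitTimeLT X k' ω : ℕ∞) : ENNReal) ∂μ
      ≤ ENNReal.ofReal ((k' - ∫ ω, stoppedVal X (hitTimeLT X k') ω ∂μ) / h k'
          + ∫ z in k'..x0, 1 / h z) := by
  have hlimit : driftPotential k' h x0 - (∫ ω, stoppedVal X (hitTimeLT X k') ω ∂μ) / h k' =
      (k' - ∫ ω, stoppedVal X (hitTimeLT X k') ω ∂μ) / h k' + ∫ z in k'..x0, 1 / h z := by
    rw [driftPotential_of_ge hk'.le hpos hmono hx0]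
    ring
  have hbound : ∀ n, ∑ t ∈ Finset.range n, μ.real {ω | (t : ℕ∞) < hitTimeLT X k' ω} ≤
      (k' - ∫ ω, stoppedVal X (hitTimeLT X k') ω ∂μ) / h k' + ∫ z in k'..x0, 1 / h z := by
    intro n
    rw [← hlimit]
    refine ge_of_tendsto (((tendsto_setIntegral_le_of_ae_lt_top
      (fun n => ℱ.le n _ (measurableSet_hitTimeLT_le hadapt k' n)) hfin hTint).div_const
        _).const_sub _) ?_
    filter_upwards [eventually_ge_atTop n] with m hnm
    exact (Finset.sum_le_sum_of_subset_of_nonneg (Finset.range_mono hnm)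
      fun _ _ _ => measureReal_nonneg).trans
        (sum_measureReal_lt_hitTimeLT_le hadapt hint hX0 hTint hk'.le hpos hmono hdrift m)
  rw [lintegral_toENNReal_eq_tsum_measure_lt fun t =>
    ℱ.le t _ (measurableSet_lt_hitTimeLT hadapt k' t)]
  refine ENNReal.tsum_le_of_sum_range_le fun n => ?_
  rw [← ENNReal.ofReal_toReal (ENNReal.sum_ne_top.2 fun t _ => measure_ne_top μ _),
    ENNReal.toReal_sum fun t _ => measure_ne_top μ _]
  exact ENNReal.ofReal_le_ofReal (hbound n)

/-- Overshoot-aware variable drift, upper bound: if the adapted integrable nonnegative process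
starts at the deterministic value `x0 ≥ k' > 0`, its hitting time `T = inf{t : X_t < k'}` is
a.s. finite with `X_T` integrable, and `h : [k',∞) → (0,∞)` is non-decreasing with
`X_t − E[X_{t+1} | F_t] ≥ h(X_t)` before time `T`, then
`E[T] ≤ (k' − E[X_T])/h(k') + ∫_{k'}^{x0} 1/h(z) dz`. -/
theorem overshoot_aware_variable_drift_upper
    {Ω : Type*} {m0 : MeasurableSpace Ω} (μ : Measure Ω) [IsProbabilityMeasure μ]
    (ℱ : Filtration ℕ m0) (X : ℕ → Ω → ℝ)
    (hadapt : Adapted ℱ X) (hint : ∀ t, Integrable (X t) μ)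
    (hnonneg : ∀ t ω, 0 ≤ X t ω)
    (k' x0 : ℝ) (hk' : 0 < k') (hx0 : k' ≤ x0) (hX0 : ∀ ω, X 0 ω = x0)
    (hfin : ∀ᵐ ω ∂μ, hitTimeLT X k' ω < ⊤)
    (hTint : Integrable (stoppedVal X (hitTimeLT X k')) μ)
    (h : ℝ → ℝ) (hpos : ∀ z, k' ≤ z → 0 < h z) (hmono : MonotoneOn h (Set.Ici k'))
    (hdrift : ∀ t : ℕ, ∀ᵐ ω ∂μ, (t : ℕ∞) < hitTimeLT X k' ω →
      h (X t ω) ≤ X t ω - (μ[X (t + 1)|ℱ t]) ω) :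
    ∫⁻ ω, ((hitTimeLT X k' ω : ℕ∞) : ENNReal) ∂μ
      ≤ ENNReal.ofReal ((k' - ∫ ω, stoppedVal X (hitTimeLT X k') ω ∂μ) / h k'
          + ∫ z in k'..x0, 1 / h z) :=
  overshoot_aware_variable_drift_upper_general μ ℱ X hadapt hint k' x0 hk' hx0 hX0 hfin hTint h hpos
    hmono hdrift
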